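/- (Optimality of DSGAN, value function.) Let ν be a σ-finite measure on a measurable space Y and μ a σ-finite measure on a measurable space X. Let p, q : Y → ℝ be nonnegative measurable with ∫ p dν = 1 and ∫ q dν = 1, and px, qx : Y × X → ℝ nonnegative measurable with ∫ px(y,·) dμ = 1 and ∫ qx(y,·) dμ = 1 for every y. Let P♯ and Q♯ be the probability measures on Y × X with joint densities (y,x) ↦ p(y)·px(y,x) and (y,x) ↦ q(y)·qx(y,x) with respect to ν⊗μ. Assuming the relevant integrands are (ν⊗μ)-integrable (convention 0·log(0/0) = 0), the supremum over measurable D : Y × X → (0,1) of ∫∫ p(y)·px(y,x)·log D(y,x) d(ν⊗μ) + ∫∫ q(y)·qx(y,x)·log(1 − D(y,x)) d(ν⊗μ) equals −2·log 2 + 2·JSD(P♯, Q♯). -/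

import Mathlib

open MeasureTheory ENNReal

/-- Kullback–Leibler divergence `KL(P ‖ M) = ∫ log (dP/dM) dP`. -/
noncomputable def klDiv {Ω : Type*} [MeasurableSpace Ω] (P M : Measure Ω) : ℝ :=
  ∫ ω, Real.log ((P.rnDeriv M ω).toReal) ∂P

/-- Jensen–Shannon divergence
`JSD(P, Q) = (1/2) KL(P ‖ M) + (1/2) KL(Q ‖ M)` with `M = (1/2) • (P + Q)`. -/
noncomputable def jsd {Ω : Type*} [MeasurableSpace Ω] (P Q : Measure Ω) : ℝ :=
  (1 / 2) * klDiv P ((1 / 2 : ℝ≥0∞) • (P + Q)) +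
  (1 / 2) * klDiv Q ((1 / 2 : ℝ≥0∞) • (P + Q))

/-!
Pointwise, `t ↦ a log t + b log (1 - t)` is maximised on `(0, 1)` at `t = a / (a + b)` (Gibbs'
inequality for two points, from `log x ≤ x - 1`), so with `f, g` the joint densities every
discriminator value is at most `∫ f log (f / (f + g)) + ∫ g log (g / (f + g))`. The supremum need
not be attained, but the discriminators `c · f / (f + g) + (1 - c) / 2` lose at most
`(∫ f + ∫ g) log c`, which tends to `0` as `c → 1⁻`. The mixture `(P♯ + Q♯) / 2` has density
`(f + g) / 2`, so `KL(P♯ ‖ M) = log 2 + ∫ f log (f / (f + g))` and symmetrically for `Q♯`; this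
identifies the bound with `-2 log 2 + 2 JSD(P♯, Q♯)`.
-/

lemma mul_log_le_mul_log_div_add {a s t : ℝ} (ha : 0 ≤ a) (hs : 0 < s) (ht : 0 < t) :
    a * Real.log t ≤ a * Real.log (a / s) + (t * s - a) := by
  rcases ha.eq_or_lt with rfl | ha
  · simp only [zero_mul, zero_add, sub_zero]
    positivity
  have key := mul_le_mul_of_nonneg_left
    (Real.log_le_sub_one_of_pos (x := t * s / a) (by positivity)) ha.le
  rw [Real.log_div (by positivity) ha.ne', Real.log_mul ht.ne' hs.ne'] at key
  rw [Real.log_div ha.ne' hs.ne']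
  have : a * (t * s / a - 1) = t * s - a := by field_simp
  linarith

lemma mul_log_div_add_mul_log_le {a s c d : ℝ} (ha : 0 ≤ a) (hs : a ≤ s) (hc : 0 < c)
    (hd : 0 ≤ d) : a * Real.log (a / s) + a * Real.log c ≤ a * Real.log (c * (a / s) + d) := by
  rcases ha.eq_or_lt with rfl | ha
  · simp
  have has : 0 < a / s := div_pos ha (ha.trans_le hs)
  rw [← mul_add, ← Real.log_mul has.ne' hc.ne', mul_comm (a / s)]
  exact mul_le_mul_of_nonneg_left
    (Real.log_le_log (by positivity) (le_add_of_nonneg_right hd)) ha.le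

lemma mul_log_add_mul_log_one_sub_le {a b t : ℝ} (ha : 0 ≤ a) (hb : 0 ≤ b) (ht0 : 0 < t)
    (ht1 : t < 1) :
    a * Real.log t + b * Real.log (1 - t) ≤
      a * Real.log (a / (a + b)) + b * Real.log (b / (a + b)) := by
  rcases (add_nonneg ha hb).eq_or_lt with hs | hs
  · obtain ⟨rfl, rfl⟩ : a = 0 ∧ b = 0 := ⟨by linarith, by linarith⟩
    simp
  have := mul_log_le_mul_log_div_add ha hs ht0
  have := mul_log_le_mul_log_div_add hb hs (sub_pos.2 ht1)
  linarith

lemma le_mul_log_add_mul_log_one_sub {a b c : ℝ} (ha : 0 ≤ a) (hb : 0 ≤ b) (hc : 0 < c)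
    (hc1 : c ≤ 1) :
    a * Real.log (a / (a + b)) + b * Real.log (b / (a + b)) + (a + b) * Real.log c ≤
      a * Real.log (c * (a / (a + b)) + (1 - c) / 2) +
        b * Real.log (1 - (c * (a / (a + b)) + (1 - c) / 2)) := by
  rcases (add_nonneg ha hb).eq_or_lt with hs | hs
  · obtain ⟨rfl, rfl⟩ : a = 0 ∧ b = 0 := ⟨by linarith, by linarith⟩
    simp
  have hcompl : 1 - (c * (a / (a + b)) + (1 - c) / 2) = c * (b / (a + b)) + (1 - c) / 2 := by
    field_simp
    ring
  rw [hcompl]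
  have := mul_log_div_add_mul_log_le ha (le_add_of_nonneg_right hb) hc
    (d := (1 - c) / 2) (by linarith)
  have := mul_log_div_add_mul_log_le hb (le_add_of_nonneg_left ha) hc
    (d := (1 - c) / 2) (by linarith)
  linarith

lemma abs_log_le_neg_log_of_le {m u : ℝ} (hm : 0 < m) (hmu : m ≤ u) (hu : u ≤ 1) :
    |Real.log u| ≤ -Real.log m := by
  rw [abs_of_nonpos (Real.log_nonpos (hm.trans_le hmu).le hu), neg_le_neg_iff]
  exact Real.log_le_log hm hmu

section Densities

variable {Z : Type*} [MeasurableSpace Z] {π : Measure Z} {f g : Z → ℝ}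

lemma klDiv_withDensity_ofReal {m : Z → ℝ} (hfm : Measurable f) (hmm : Measurable m)
    (hf0 : ∀ z, 0 ≤ f z) (hm0 : ∀ z, 0 ≤ m z) (hmi : Integrable m π)
    (hfm0 : ∀ z, m z = 0 → f z = 0) :
    klDiv (π.withDensity fun z => ENNReal.ofReal (f z))
        (π.withDensity fun z => ENNReal.ofReal (m z)) =
      ∫ z, f z * Real.log (f z / m z) ∂π := by
  set M := π.withDensity fun z => ENNReal.ofReal (m z)
  have : IsFiniteMeasure M := isFiniteMeasure_withDensity_ofReal hmi.2
  set r : Z → ℝ≥0∞ := fun z => ENNReal.ofReal (f z) / ENNReal.ofReal (m z)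
  have hr : Measurable r := hfm.ennreal_ofReal.div hmm.ennreal_ofReal
  -- Taking `dP/dM` against the finite measure `M` needs no σ-finiteness of `π`.
  have hP : π.withDensity (fun z => ENNReal.ofReal (f z)) = M.withDensity r := by
    rw [← withDensity_mul _ hmm.ennreal_ofReal hr]
    congr 1
    funext z
    refine (ENNReal.mul_div_cancel' (fun h => ?_) (by simp)).symm
    rw [hfm0 z ((ENNReal.ofReal_eq_zero.1 h).antisymm (hm0 z)), ENNReal.ofReal_zero]
  have hrn : ∀ᵐ z ∂(M.withDensity r), (M.withDensity r).rnDeriv M z = r z :=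
    withDensity_absolutelyContinuous M r (Measure.rnDeriv_withDensity M hr)
  unfold klDiv
  rw [hP, integral_congr_ae (hrn.mono fun z hz => by rw [hz]), ← hP,
    integral_withDensity_eq_integral_toReal_smul hfm.ennreal_ofReal
      (ae_of_all _ fun _ => ENNReal.ofReal_lt_top)]
  refine integral_congr_ae (ae_of_all _ fun z => ?_)
  simp only [r, smul_eq_mul, ENNReal.toReal_div, ENNReal.toReal_ofReal (hf0 z),
    ENNReal.toReal_ofReal (hm0 z)]

lemma half_smul_add_withDensity_ofReal (hfm : Measurable f) (hgm : Measurable g)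
    (hf0 : ∀ z, 0 ≤ f z) (hg0 : ∀ z, 0 ≤ g z) :
    (1 / 2 : ℝ≥0∞) • (π.withDensity (fun z => ENNReal.ofReal (f z)) +
        π.withDensity fun z => ENNReal.ofReal (g z)) =
      π.withDensity fun z => ENNReal.ofReal ((f z + g z) / 2) := by
  rw [← withDensity_add_left hfm.ennreal_ofReal,
    ← withDensity_smul _ (hfm.ennreal_ofReal.add hgm.ennreal_ofReal)]
  congr 1
  funext z
  rw [Pi.smul_apply, Pi.add_apply, smul_eq_mul, ← ENNReal.ofReal_add (hf0 z) (hg0 z),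
    div_eq_inv_mul, ENNReal.ofReal_mul (by norm_num), one_div, ENNReal.ofReal_inv_of_pos two_pos,
    ENNReal.ofReal_ofNat]

lemma klDiv_withDensity_half_add (hfm : Measurable f) (hgm : Measurable g) (hf0 : ∀ z, 0 ≤ f z)
    (hg0 : ∀ z, 0 ≤ g z) (hfi : Integrable f π) (hgi : Integrable g π) (hf1 : ∫ z, f z ∂π = 1)
    (hlog : Integrable (fun z => f z * Real.log (f z / (f z + g z))) π) :
    klDiv (π.withDensity fun z => ENNReal.ofReal (f z))
        ((1 / 2 : ℝ≥0∞) • (π.withDensity (fun z => ENNReal.ofReal (f z)) +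
          π.withDensity fun z => ENNReal.ofReal (g z))) =
      Real.log 2 + ∫ z, f z * Real.log (f z / (f z + g z)) ∂π := by
  have hsplit : ∀ z, f z * Real.log (f z / ((f z + g z) / 2)) =
      f z * Real.log 2 + f z * Real.log (f z / (f z + g z)) := fun z => by
    rcases (hf0 z).eq_or_lt with hz | hz
    · simp [← hz]
    have : 0 < f z + g z := add_pos_of_pos_of_nonneg hz (hg0 z)
    have h2 : f z / ((f z + g z) / 2) = 2 * (f z / (f z + g z)) := by field_simp
    rw [h2, Real.log_mul two_ne_zero (by positivity), mul_add]
  rw [half_smul_add_withDensity_ofReal hfm hgm hf0 hg0,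
    klDiv_withDensity_ofReal (m := fun z => (f z + g z) / 2) hfm ((hfm.add hgm).div_const 2) hf0
      (fun z => by linarith [hf0 z, hg0 z]) ((hfi.add hgi).div_const 2)
      (fun z hz => by linarith [hf0 z, hg0 z]),
    integral_congr_ae (ae_of_all _ hsplit), integral_add (hfi.mul_const _) hlog,
    integral_mul_const, hf1, one_mul]

lemma jsd_withDensity_ofReal (hfm : Measurable f) (hgm : Measurable g) (hf0 : ∀ z, 0 ≤ f z)
    (hg0 : ∀ z, 0 ≤ g z) (hfi : Integrable f π) (hgi : Integrable g π) (hf1 : ∫ z, f z ∂π = 1)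
    (hg1 : ∫ z, g z ∂π = 1)
    (hflog : Integrable (fun z => f z * Real.log (f z / (f z + g z))) π)
    (hglog : Integrable (fun z => g z * Real.log (g z / (f z + g z))) π) :
    jsd (π.withDensity fun z => ENNReal.ofReal (f z))
        (π.withDensity fun z => ENNReal.ofReal (g z)) =
      Real.log 2 + ((∫ z, f z * Real.log (f z / (f z + g z)) ∂π) +
        ∫ z, g z * Real.log (g z / (f z + g z)) ∂π) / 2 := by
  have hQ := klDiv_withDensity_half_add hgm hfm hg0 hf0 hgi hfi hg1
    (by simpa only [add_comm (g _) (f _)] using hglog)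
  simp_rw [add_comm (g _) (f _)] at hQ
  rw [jsd, klDiv_withDensity_half_add hfm hgm hf0 hg0 hfi hgi hf1 hflog,
    add_comm (π.withDensity _), hQ]
  ring

def discriminatorValues (π : Measure Z) (f g : Z → ℝ) : Set ℝ :=
  {r : ℝ | ∃ D : Z → ℝ, Measurable D ∧ (∀ z, 0 < D z ∧ D z < 1) ∧
    Integrable (fun z => f z * Real.log (D z)) π ∧
    Integrable (fun z => g z * Real.log (1 - D z)) π ∧
    r = ∫ z, f z * Real.log (D z) ∂π + ∫ z, g z * Real.log (1 - D z) ∂π}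

lemma integrable_mul_log_of_le {D : Z → ℝ} {m : ℝ} (hfi : Integrable f π) (hD : Measurable D)
    (hm : 0 < m) (hmD : ∀ z, m ≤ D z) (hD1 : ∀ z, D z ≤ 1) :
    Integrable (fun z => f z * Real.log (D z)) π :=
  hfi.mul_bdd (Real.measurable_log.comp hD).aestronglyMeasurable
    (ae_of_all _ fun z => abs_log_le_neg_log_of_le hm (hmD z) (hD1 z))

lemma mem_upperBounds_discriminatorValues (hf0 : ∀ z, 0 ≤ f z) (hg0 : ∀ z, 0 ≤ g z)
    (hflog : Integrable (fun z => f z * Real.log (f z / (f z + g z))) π)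
    (hglog : Integrable (fun z => g z * Real.log (g z / (f z + g z))) π) :
    (∫ z, f z * Real.log (f z / (f z + g z)) ∂π) +
        ∫ z, g z * Real.log (g z / (f z + g z)) ∂π ∈ upperBounds (discriminatorValues π f g) := by
  rintro r ⟨D, -, hD, hfD, hgD, rfl⟩
  rw [← integral_add hfD hgD, ← integral_add hflog hglog]
  exact integral_mono (hfD.add hgD) (hflog.add hglog) fun z =>
    mul_log_add_mul_log_one_sub_le (hf0 z) (hg0 z) (hD z).1 (hD z).2

lemma exists_mem_discriminatorValues_ge (hfm : Measurable f) (hgm : Measurable g)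
    (hf0 : ∀ z, 0 ≤ f z) (hg0 : ∀ z, 0 ≤ g z) (hfi : Integrable f π) (hgi : Integrable g π)
    (hflog : Integrable (fun z => f z * Real.log (f z / (f z + g z))) π)
    (hglog : Integrable (fun z => g z * Real.log (g z / (f z + g z))) π) {c : ℝ} (hc0 : 0 < c)
    (hc1 : c < 1) :
    ∃ r ∈ discriminatorValues π f g,
      (∫ z, f z * Real.log (f z / (f z + g z)) ∂π) +
        (∫ z, g z * Real.log (g z / (f z + g z)) ∂π) +
          ((∫ z, f z ∂π) + ∫ z, g z ∂π) * Real.log c ≤ r := by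
  -- Where `f z + g z = 0` the ratio is the junk value `0`; both weights vanish there.
  set D : Z → ℝ := fun z => c * (f z / (f z + g z)) + (1 - c) / 2
  have hratio : ∀ z, 0 ≤ f z / (f z + g z) ∧ f z / (f z + g z) ≤ 1 := fun z =>
    ⟨div_nonneg (hf0 z) (add_nonneg (hf0 z) (hg0 z)),
      div_le_one_of_le₀ (le_add_of_nonneg_right (hg0 z)) (add_nonneg (hf0 z) (hg0 z))⟩
  have hDlow : ∀ z, (1 - c) / 2 ≤ D z := fun z => by
    have := mul_nonneg hc0.le (hratio z).1; simp only [D]; linarith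
  have hDup : ∀ z, D z ≤ 1 - (1 - c) / 2 := fun z => by
    have := mul_le_mul_of_nonneg_left (hratio z).2 hc0.le; simp only [D]; linarith
  have hDm : Measurable D := ((hfm.div (hfm.add hgm)).const_mul c).add_const _
  have hfD := integrable_mul_log_of_le (m := (1 - c) / 2) hfi hDm (by linarith) hDlow
    (fun z => by linarith [hDup z])
  have hgD := integrable_mul_log_of_le (m := (1 - c) / 2) (D := fun z => 1 - D z) hgi
    (measurable_const.sub hDm) (by linarith) (fun z => by linarith [hDup z])
    (fun z => by linarith [hDlow z])
  refine ⟨_, ⟨D, hDm, fun z => ⟨by linarith [hDlow z], by linarith [hDup z]⟩, hfD, hgD, rfl⟩, ?_⟩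
  have key := integral_mono ((hflog.add hglog).add ((hfi.add hgi).mul_const (Real.log c)))
    (hfD.add hgD) fun z => le_mul_log_add_mul_log_one_sub (hf0 z) (hg0 z) hc0 hc1.le
  rwa [integral_add' (hflog.add hglog) ((hfi.add hgi).mul_const _), integral_add' hflog hglog,
    integral_mul_const, integral_add' hfi hgi, integral_add' hfD hgD] at key

open Filter Topology in
lemma isLUB_discriminatorValues (hfm : Measurable f) (hgm : Measurable g)
    (hf0 : ∀ z, 0 ≤ f z) (hg0 : ∀ z, 0 ≤ g z) (hfi : Integrable f π) (hgi : Integrable g π)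
    (hflog : Integrable (fun z => f z * Real.log (f z / (f z + g z))) π)
    (hglog : Integrable (fun z => g z * Real.log (g z / (f z + g z))) π) :
    IsLUB (discriminatorValues π f g)
      ((∫ z, f z * Real.log (f z / (f z + g z)) ∂π) +
        ∫ z, g z * Real.log (g z / (f z + g z)) ∂π) := by
  refine ⟨mem_upperBounds_discriminatorValues hf0 hg0 hflog hglog, fun b hb => ?_⟩
  set V := (∫ z, f z * Real.log (f z / (f z + g z)) ∂π) +
    ∫ z, g z * Real.log (g z / (f z + g z)) ∂π
  have hlim : Tendsto (fun c => V + ((∫ z, f z ∂π) + ∫ z, g z ∂π) * Real.log c) (𝓝[<] 1) (𝓝 V) := by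
    have hlog : Tendsto Real.log (𝓝[<] 1) (𝓝 0) := by
      simpa using (Real.continuousAt_log one_ne_zero).tendsto.mono_left nhdsWithin_le_nhds
    simpa using (hlog.const_mul ((∫ z, f z ∂π) + ∫ z, g z ∂π)).const_add V
  refine le_of_tendsto hlim ?_
  filter_upwards [Ioo_mem_nhdsLT zero_lt_one] with c hc
  obtain ⟨r, hr, hle⟩ := exists_mem_discriminatorValues_ge hfm hgm hf0 hg0 hfi hgi hflog hglog
    hc.1 hc.2
  exact hle.trans (hb hr)

end Densities

lemma lintegral_ofReal_eq_one {Ω : Type*} [MeasurableSpace Ω] {μ : Measure Ω} {h : Ω → ℝ}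
    (h0 : ∀ ω, 0 ≤ h ω) (h1 : ∫ ω, h ω ∂μ = 1) : ∫⁻ ω, ENNReal.ofReal (h ω) ∂μ = 1 := by
  rw [← ofReal_integral_eq_lintegral_ofReal (Integrable.of_integral_ne_zero (by simp [h1]))
    (ae_of_all _ h0), h1, ENNReal.ofReal_one]

lemma integral_prod_mul_eq_one {Y X : Type*} [MeasurableSpace Y] [MeasurableSpace X]
    {ν : Measure Y} {μ : Measure X} [SFinite μ] {p : Y → ℝ} {px : Y × X → ℝ}
    (hpm : Measurable p) (hpxm : Measurable px) (hp0 : ∀ y, 0 ≤ p y) (hpx0 : ∀ z, 0 ≤ px z)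
    (hp1 : ∫ y, p y ∂ν = 1) (hpx1 : ∀ y, ∫ x, px (y, x) ∂μ = 1) :
    ∫ z, p z.1 * px z ∂(ν.prod μ) = 1 := by
  have hfm : Measurable fun z : Y × X => p z.1 * px z := by fun_prop
  have hinner : ∀ y, ∫⁻ x, ENNReal.ofReal (p y * px (y, x)) ∂μ = ENNReal.ofReal (p y) := fun y => by
    simp_rw [ENNReal.ofReal_mul (hp0 y)]
    rw [lintegral_const_mul _ (by fun_prop),
      lintegral_ofReal_eq_one (fun x => hpx0 _) (hpx1 y), mul_one]
  rw [integral_eq_lintegral_of_nonneg_ae (ae_of_all _ fun z => mul_nonneg (hp0 _) (hpx0 _))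
      hfm.aestronglyMeasurable, lintegral_prod _ hfm.ennreal_ofReal.aemeasurable]
  simp_rw [hinner]
  rw [lintegral_ofReal_eq_one hp0 hp1, ENNReal.toReal_one]

theorem dsgan_sup_value_eq_joint_jsd_general
    {Y X : Type*} [MeasurableSpace Y] [MeasurableSpace X]
    (ν : Measure Y) (μ : Measure X) [SigmaFinite μ]
    (p q : Y → ℝ) (hpm : Measurable p) (hqm : Measurable q)
    (hp0 : ∀ y, 0 ≤ p y) (hq0 : ∀ y, 0 ≤ q y)
    (hp1 : ∫ y, p y ∂ν = 1) (hq1 : ∫ y, q y ∂ν = 1)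
    (px qx : Y × X → ℝ) (hpxm : Measurable px) (hqxm : Measurable qx)
    (hpx0 : ∀ z, 0 ≤ px z) (hqx0 : ∀ z, 0 ≤ qx z)
    (hpx1 : ∀ y, ∫ x, px (y, x) ∂μ = 1) (hqx1 : ∀ y, ∫ x, qx (y, x) ∂μ = 1)
    (h3 : Integrable
      (fun z => p z.1 * px z *
        Real.log (p z.1 * px z / (p z.1 * px z + q z.1 * qx z))) (ν.prod μ))
    (h4 : Integrable
      (fun z => q z.1 * qx z *
        Real.log (q z.1 * qx z / (p z.1 * px z + q z.1 * qx z))) (ν.prod μ)) :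
    IsLUB
      {r : ℝ | ∃ D : Y × X → ℝ, Measurable D ∧ (∀ z, 0 < D z ∧ D z < 1) ∧
        Integrable (fun z => p z.1 * px z * Real.log (D z)) (ν.prod μ) ∧
        Integrable (fun z => q z.1 * qx z * Real.log (1 - D z)) (ν.prod μ) ∧
        r = ∫ z, p z.1 * px z * Real.log (D z) ∂(ν.prod μ) +
            ∫ z, q z.1 * qx z * Real.log (1 - D z) ∂(ν.prod μ)}
      (-2 * Real.log 2 +
        2 * jsd ((ν.prod μ).withDensity fun z => ENNReal.ofReal (p z.1 * px z))
                ((ν.prod μ).withDensity fun z => ENNReal.ofReal (q z.1 * qx z))) := by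
  have hfm : Measurable fun z : Y × X => p z.1 * px z := by fun_prop
  have hgm : Measurable fun z : Y × X => q z.1 * qx z := by fun_prop
  have hf0 : ∀ z : Y × X, 0 ≤ p z.1 * px z := fun z => mul_nonneg (hp0 _) (hpx0 _)
  have hg0 : ∀ z : Y × X, 0 ≤ q z.1 * qx z := fun z => mul_nonneg (hq0 _) (hqx0 _)
  have hf1 := integral_prod_mul_eq_one hpm hpxm hp0 hpx0 hp1 hpx1
  have hg1 := integral_prod_mul_eq_one hqm hqxm hq0 hqx0 hq1 hqx1
  have hfi := Integrable.of_integral_ne_zero (hf1.symm ▸ one_ne_zero)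
  have hgi := Integrable.of_integral_ne_zero (hg1.symm ▸ one_ne_zero)
  rw [jsd_withDensity_ofReal hfm hgm hf0 hg0 hfi hgi hf1 hg1 h3 h4, mul_add,
    mul_div_cancel₀ _ two_ne_zero, neg_mul, neg_add_cancel_left]
  exact isLUB_discriminatorValues hfm hgm hf0 hg0 hfi hgi h3 h4

/-- Optimality of DSGAN: the value function. -/
theorem dsgan_sup_value_eq_joint_jsd
    {Y X : Type*} [MeasurableSpace Y] [MeasurableSpace X]
    (ν : Measure Y) [SigmaFinite ν] (μ : Measure X) [SigmaFinite μ]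
    (p q : Y → ℝ) (hpm : Measurable p) (hqm : Measurable q)
    (hp0 : ∀ y, 0 ≤ p y) (hq0 : ∀ y, 0 ≤ q y)
    (hp1 : ∫ y, p y ∂ν = 1) (hq1 : ∫ y, q y ∂ν = 1)
    (px qx : Y × X → ℝ) (hpxm : Measurable px) (hqxm : Measurable qx)
    (hpx0 : ∀ z, 0 ≤ px z) (hqx0 : ∀ z, 0 ≤ qx z)
    (hpx1 : ∀ y, ∫ x, px (y, x) ∂μ = 1) (hqx1 : ∀ y, ∫ x, qx (y, x) ∂μ = 1)
    (h3 : Integrable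
      (fun z => p z.1 * px z *
        Real.log (p z.1 * px z / (p z.1 * px z + q z.1 * qx z))) (ν.prod μ))
    (h4 : Integrable
      (fun z => q z.1 * qx z *
        Real.log (q z.1 * qx z / (p z.1 * px z + q z.1 * qx z))) (ν.prod μ)) :
    IsLUB
      {r : ℝ | ∃ D : Y × X → ℝ, Measurable D ∧ (∀ z, 0 < D z ∧ D z < 1) ∧
        Integrable (fun z => p z.1 * px z * Real.log (D z)) (ν.prod μ) ∧
        Integrable (fun z => q z.1 * qx z * Real.log (1 - D z)) (ν.prod μ) ∧
        r = ∫ z, p z.1 * px z * Real.log (D z) ∂(ν.prod μ) +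
            ∫ z, q z.1 * qx z * Real.log (1 - D z) ∂(ν.prod μ)}
      (-2 * Real.log 2 +
        2 * jsd ((ν.prod μ).withDensity fun z => ENNReal.ofReal (p z.1 * px z))
                ((ν.prod μ).withDensity fun z => ENNReal.ofReal (q z.1 * qx z))) :=
  dsgan_sup_value_eq_joint_jsd_general ν μ p q hpm hqm hp0 hq0 hp1 hq1 px qx hpxm hqxm hpx0 hqx0
    hpx1 hqx1 h3 h4
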